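/- arXiv:1507.08821 — 3 statements merged into one kernel-verified Lean document; each statement's English description precedes it below -/
import Mathlib

section
/- Let A be a Poisson algebra, let I be a coisotropic ideal of the underlying commutative ring of A, and let B_I = {f ∈ A : ⁅f, i⁆ ∈ I for all i ∈ I}, viewed as a commutative ring in which I is an ideal. Then the quotient commutative ring B_I/I carries a bracket, induced by the bracket of A (i.e., ⁅f + I, g + I⁆ = ⁅f, g⁆ + I for f, g ∈ B_I), which is additive in each argument, antisymmetric, satisfies the Jacobi identity, and satisfies the Leibniz rule; hence B_I/I is a Poisson algebra and the quotient map B_I → B_I/I preserves products and brackets. -/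
/-!
For `f, g ∈ B_I` and `i ∈ I`, the Jacobi identity rewrites `⁅⁅f, g⁆, i⁆` as
`⁅f, ⁅g, i⁆⁆ - ⁅g, ⁅f, i⁆⁆ ∈ I`, so `B_I` is closed under the bracket. For `f₁ - f₂, g₁ - g₂ ∈ I`,
`⁅f₁, g₁⁆ - ⁅f₂, g₂⁆ = -⁅g₁, f₁ - f₂⁆ + ⁅f₂, g₁ - g₂⁆ ∈ I`, so the bracket of `B_I` descends to
`B_I / I`. The axioms of a Poisson bracket are identities, so they pass to the subring and then,
through the surjective quotient map, to the quotient.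
-/

structure IsPoissonBracket {A : Type*} [CommRing A] (br : A → A → A) : Prop where
  add_left : ∀ a b c : A, br (a + b) c = br a c + br b c
  add_right : ∀ a b c : A, br a (b + c) = br a b + br a c
  antisymm : ∀ a b : A, br a b = - br b a
  jacobi : ∀ a b c : A, br a (br b c) + br b (br c a) + br c (br a b) = 0
  leibniz : ∀ a b c : A, br a (b * c) = br a b * c + b * br a c

namespace IsPoissonBracket

variable {A : Type*} [CommRing A] {br : A → A → A}

theorem neg_right (hP : IsPoissonBracket br) (a b : A) : br a (-b) = -br a b :=
  (AddMonoidHom.mk' (br a) (hP.add_right a)).map_neg b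

theorem sub_left (hP : IsPoissonBracket br) (a b c : A) : br (a - b) c = br a c - br b c :=
  (AddMonoidHom.mk' (br · c) (fun a b => hP.add_left a b c)).map_sub a b

theorem sub_right (hP : IsPoissonBracket br) (a b c : A) : br a (b - c) = br a b - br a c :=
  (AddMonoidHom.mk' (br a) (hP.add_right a)).map_sub b c

theorem bracket_mem_of_forall_bracket_mem (hP : IsPoissonBracket br) {I : Ideal A} {f g : A}
    (hf : ∀ i ∈ I, br f i ∈ I) (hg : ∀ i ∈ I, br g i ∈ I) :
    ∀ i ∈ I, br (br f g) i ∈ I := by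
  intro i hi
  have hjacobi : br (br f g) i = br f (br g i) - br g (br f i) := by
    have := hP.jacobi f g i
    rw [hP.antisymm i f, hP.neg_right, hP.antisymm i] at this
    linear_combination -this
  rw [hjacobi]
  exact I.sub_mem (hf _ (hg i hi)) (hg _ (hf i hi))

theorem bracket_sub_bracket_mem (hP : IsPoissonBracket br) {I : Ideal A} {f₁ f₂ g₁ g₂ : A}
    (hf₂ : ∀ i ∈ I, br f₂ i ∈ I) (hg₁ : ∀ i ∈ I, br g₁ i ∈ I)
    (hf : f₁ - f₂ ∈ I) (hg : g₁ - g₂ ∈ I) :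
    br f₁ g₁ - br f₂ g₂ ∈ I := by
  have hsplit : br f₁ g₁ - br f₂ g₂ = -br g₁ (f₁ - f₂) + br f₂ (g₁ - g₂) := by
    rw [← hP.antisymm, hP.sub_left, hP.sub_right]
    ring
  rw [hsplit]
  exact I.add_mem (I.neg_mem (hg₁ _ hf)) (hf₂ _ hg)

theorem subring (hP : IsPoissonBracket br) {B : Subring A} (hB : ∀ f g : B, br f g ∈ B) :
    IsPoissonBracket (fun f g : B => (⟨br f g, hB f g⟩ : B)) where
  add_left a b c := Subtype.ext (hP.add_left a b c)
  add_right a b c := Subtype.ext (hP.add_right a b c)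
  antisymm a b := Subtype.ext (hP.antisymm a b)
  jacobi a b c := Subtype.ext (hP.jacobi a b c)
  leibniz a b c := Subtype.ext (hP.leibniz a b c)

end IsPoissonBracket

section Quotient

variable {R : Type*} [CommRing R]

def quotientBracket (br : R → R → R) (J : Ideal R)
    (hJ : ∀ x₁ x₂ y₁ y₂ : R, x₁ - x₂ ∈ J → y₁ - y₂ ∈ J → br x₁ y₁ - br x₂ y₂ ∈ J) :
    R ⧸ J → R ⧸ J → R ⧸ J :=
  fun a b => Quotient.liftOn₂ a b (fun x y => Ideal.Quotient.mk J (br x y)) fun _ _ _ _ hx hy =>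
    Ideal.Quotient.eq.mpr <|
      hJ _ _ _ _ ((Submodule.quotientRel_def J).mp hx) ((Submodule.quotientRel_def J).mp hy)

variable {br : R → R → R} {J : Ideal R}
  {hJ : ∀ x₁ x₂ y₁ y₂ : R, x₁ - x₂ ∈ J → y₁ - y₂ ∈ J → br x₁ y₁ - br x₂ y₂ ∈ J}

@[simp]
theorem quotientBracket_mk (x y : R) :
    quotientBracket br J hJ (Ideal.Quotient.mk J x) (Ideal.Quotient.mk J y) =
      Ideal.Quotient.mk J (br x y) :=
  rfl

theorem IsPoissonBracket.quotient (hP : IsPoissonBracket br) :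
    IsPoissonBracket (quotientBracket br J hJ) := by
  have hsurj := Ideal.Quotient.mk_surjective (I := J)
  constructor <;> simp only [hsurj.forall, ← map_add, ← map_mul, ← map_neg, quotientBracket_mk,
    hP.add_left, hP.add_right, hP.jacobi, hP.leibniz, map_zero, implies_true]
  exact fun x y => congrArg _ (hP.antisymm x y)

end Quotient

theorem stmt_5_general
    {A : Type*} [CommRing A]
    (br : A → A → A)
    (br_add_left : ∀ a b c : A, br (a + b) c = br a c + br b c)
    (br_add_right : ∀ a b c : A, br a (b + c) = br a b + br a c)
    (br_antisymm : ∀ a b : A, br a b = - br b a)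
    (br_jacobi : ∀ a b c : A, br a (br b c) + br b (br c a) + br c (br a b) = 0)
    (br_leibniz : ∀ a b c : A, br a (b * c) = br a b * c + b * br a c)
    (I : Ideal A)
    (B : Subring A) (hB : ∀ f : A, f ∈ B ↔ ∀ i ∈ I, br f i ∈ I)
    (J : Ideal B) (hJ : ∀ x : B, x ∈ J ↔ (x : A) ∈ I) :
    ∃ br' : (B ⧸ J) → (B ⧸ J) → (B ⧸ J),
      (∀ a b c : B ⧸ J, br' (a + b) c = br' a c + br' b c) ∧
      (∀ a b c : B ⧸ J, br' a (b + c) = br' a b + br' a c) ∧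
      (∀ a b : B ⧸ J, br' a b = - br' b a) ∧
      (∀ a b c : B ⧸ J, br' a (br' b c) + br' b (br' c a) + br' c (br' a b) = 0) ∧
      (∀ a b c : B ⧸ J, br' a (b * c) = br' a b * c + b * br' a c) ∧
      (∀ f g : B, ∀ h : br (f : A) (g : A) ∈ B,
        br' (Ideal.Quotient.mk J f) (Ideal.Quotient.mk J g) =
          Ideal.Quotient.mk J ⟨br (f : A) (g : A), h⟩) ∧
      (∀ f g : B, Ideal.Quotient.mk J (f * g) =
          Ideal.Quotient.mk J f * Ideal.Quotient.mk J g) := by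
  have hP : IsPoissonBracket br := ⟨br_add_left, br_add_right, br_antisymm, br_jacobi, br_leibniz⟩
  have hB_mem (f : B) : ∀ i ∈ I, br f i ∈ I := (hB f).mp f.2
  have hclosed (f g : B) : br f g ∈ B :=
    (hB _).mpr (hP.bracket_mem_of_forall_bracket_mem (hB_mem f) (hB_mem g))
  have hcompat (f₁ f₂ g₁ g₂ : B) (hf : f₁ - f₂ ∈ J) (hg : g₁ - g₂ ∈ J) :
      (⟨br f₁ g₁, hclosed f₁ g₁⟩ - ⟨br f₂ g₂, hclosed f₂ g₂⟩ : B) ∈ J := by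
    rw [hJ] at hf hg ⊢
    exact hP.bracket_sub_bracket_mem (hB_mem f₂) (hB_mem g₁) hf hg
  have hQ := (hP.subring hclosed).quotient (hJ := hcompat)
  exact ⟨_, hQ.add_left, hQ.add_right, hQ.antisymm, hQ.jacobi, hQ.leibniz, fun _ _ _ => rfl,
    fun _ _ => map_mul _ _ _⟩

/-- Let `A` be a Poisson algebra, `I` a coisotropic ideal of the underlying
commutative ring, and `B` the subring of `A` whose underlying set is
`B_I = {f ∈ A : ⁅f, i⁆ ∈ I for all i ∈ I}`; let `J` be the ideal of `B` corresponding to `I`.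
Then the quotient commutative ring `B ⧸ J` carries a bracket, induced by the bracket of `A`
(`⁅f + I, g + I⁆ = ⁅f, g⁆ + I`), which is additive in each argument, antisymmetric, satisfies
the Jacobi identity and the Leibniz rule; hence `B_I/I` is a Poisson algebra and the quotient
map preserves products and brackets. -/
theorem stmt_5
    {A : Type*} [CommRing A]
    (br : A → A → A)
    (br_add_left : ∀ a b c : A, br (a + b) c = br a c + br b c)
    (br_add_right : ∀ a b c : A, br a (b + c) = br a b + br a c)
    (br_antisymm : ∀ a b : A, br a b = - br b a)
    (br_jacobi : ∀ a b c : A, br a (br b c) + br b (br c a) + br c (br a b) = 0)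
    (br_leibniz : ∀ a b c : A, br a (b * c) = br a b * c + b * br a c)
    (I : Ideal A)
    (hI : ∀ i ∈ I, ∀ j ∈ I, br i j ∈ I)
    (B : Subring A) (hB : ∀ f : A, f ∈ B ↔ ∀ i ∈ I, br f i ∈ I)
    (J : Ideal B) (hJ : ∀ x : B, x ∈ J ↔ (x : A) ∈ I) :
    ∃ br' : (B ⧸ J) → (B ⧸ J) → (B ⧸ J),
      (∀ a b c : B ⧸ J, br' (a + b) c = br' a c + br' b c) ∧
      (∀ a b c : B ⧸ J, br' a (b + c) = br' a b + br' a c) ∧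
      (∀ a b : B ⧸ J, br' a b = - br' b a) ∧
      (∀ a b c : B ⧸ J, br' a (br' b c) + br' b (br' c a) + br' c (br' a b) = 0) ∧
      (∀ a b c : B ⧸ J, br' a (b * c) = br' a b * c + b * br' a c) ∧
      (∀ f g : B, ∀ h : br (f : A) (g : A) ∈ B,
        br' (Ideal.Quotient.mk J f) (Ideal.Quotient.mk J g) =
          Ideal.Quotient.mk J ⟨br (f : A) (g : A), h⟩) ∧
      (∀ f g : B, Ideal.Quotient.mk J (f * g) =
          Ideal.Quotient.mk J f * Ideal.Quotient.mk J g) :=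
  stmt_5_general br br_add_left br_add_right br_antisymm br_jacobi br_leibniz I B hB J hJ
end

section
/- Let 𝔤 be a real Lie algebra and let A be a Poisson algebra which is also a real vector space such that the bracket ⁅·,·⁆ is ℝ-bilinear. Let c : 𝔤 → A be a linear map satisfying c([ξ, η]) = ⁅c(ξ), c(η)⁆ for all ξ, η ∈ 𝔤 (the algebraic condition satisfied by the components of the comomentum map associated to a PG-map). Then the ideal of A generated by the image of c is coisotropic: for all f, g in this ideal, ⁅f, g⁆ also lies in it. -/
/-!
Each `br a` is a derivation of `A`, and a derivation preserves an ideal as soon as it maps the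
generators into it. The identity `br (c ξ) (c η) = c ⁅ξ, η⁆` shows that every `br (c ξ)`
preserves the ideal generated by the image of `c`; antisymmetry then shows that so does `br g`
for every `g` in that ideal.
-/

theorem Ideal.map_mem_span_of_leibniz {A : Type*} [CommRing A] {D : A → A}
    (map_add : ∀ a b, D (a + b) = D a + D b) (leibniz : ∀ a b, D (a * b) = D a * b + a * D b)
    {S : Set A} (hS : ∀ s ∈ S, D s ∈ Ideal.span S) {g : A} (hg : g ∈ Ideal.span S) :
    D g ∈ Ideal.span S := by
  induction hg using Submodule.span_induction with
  | mem s hs => exact hS s hs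
  | zero =>
    have map_zero : D 0 = 0 := by simpa using leibniz 0 0
    rw [map_zero]
    exact Ideal.zero_mem _
  | add a b _ _ ha hb =>
    rw [map_add]
    exact Ideal.add_mem _ ha hb
  | smul a b hb ihb =>
    rw [smul_eq_mul, leibniz]
    exact Ideal.add_mem _ (Ideal.mul_mem_left _ _ hb) (Ideal.mul_mem_left _ _ ihb)

theorem stmt_7_general
    {L : Type*} [LieRing L] [LieAlgebra ℝ L]
    {A : Type*} [CommRing A] [Algebra ℝ A]
    (br : A → A → A)
    (br_add_right : ∀ a b c : A, br a (b + c) = br a b + br a c)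
    (br_antisymm : ∀ a b : A, br a b = - br b a)
    (br_leibniz : ∀ a b c : A, br a (b * c) = br a b * c + b * br a c)
    (c : L →ₗ[ℝ] A)
    (hc : ∀ ξ η : L, c ⁅ξ, η⁆ = br (c ξ) (c η)) :
    ∀ f ∈ Ideal.span (Set.range ⇑c), ∀ g ∈ Ideal.span (Set.range ⇑c),
      br f g ∈ Ideal.span (Set.range ⇑c) := by
  set I := Ideal.span (Set.range ⇑c)
  have br_image_mem : ∀ ξ, ∀ g ∈ I, br (c ξ) g ∈ I := by
    intro ξ g hg
    refine Ideal.map_mem_span_of_leibniz (br_add_right _) (br_leibniz _) ?_ hg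
    rintro _ ⟨η, rfl⟩
    rw [← hc]
    exact Ideal.subset_span ⟨_, rfl⟩
  intro f hf g hg
  rw [br_antisymm]
  refine I.neg_mem (Ideal.map_mem_span_of_leibniz (br_add_right g) (br_leibniz g) ?_ hf)
  rintro _ ⟨ξ, rfl⟩
  rw [br_antisymm]
  exact I.neg_mem (br_image_mem ξ g hg)

/-- Let `𝔤` be a real Lie algebra and `A` a Poisson algebra which is also a
real vector space with ℝ-bilinear bracket.  Let `c : 𝔤 → A` be linear with
`c([ξ, η]) = ⁅c(ξ), c(η)⁆` for all `ξ, η`.  Then the ideal of `A` generated by the image of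
`c` is coisotropic. -/
theorem stmt_7
    {L : Type*} [LieRing L] [LieAlgebra ℝ L]
    {A : Type*} [CommRing A] [Algebra ℝ A]
    (br : A → A → A)
    (br_add_left : ∀ a b c : A, br (a + b) c = br a c + br b c)
    (br_add_right : ∀ a b c : A, br a (b + c) = br a b + br a c)
    (br_smul_left : ∀ (r : ℝ) (a b : A), br (r • a) b = r • br a b)
    (br_smul_right : ∀ (r : ℝ) (a b : A), br a (r • b) = r • br a b)
    (br_antisymm : ∀ a b : A, br a b = - br b a)
    (br_jacobi : ∀ a b c : A, br a (br b c) + br b (br c a) + br c (br a b) = 0)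
    (br_leibniz : ∀ a b c : A, br a (b * c) = br a b * c + b * br a c)
    (c : L →ₗ[ℝ] A)
    (hc : ∀ ξ η : L, c ⁅ξ, η⁆ = br (c ξ) (c η)) :
    ∀ f ∈ Ideal.span (Set.range ⇑c), ∀ g ∈ Ideal.span (Set.range ⇑c),
      br f g ∈ Ideal.span (Set.range ⇑c) :=
  stmt_7_general br br_add_right br_antisymm br_leibniz c hc
end

section
/- Let E be a real normed vector space and let θ : E → (E →L[ℝ] ℝ) be a map that is differentiable at a point q ∈ E. Define the function F : E × E → ℝ by F(p, v) = θ(p)(v), and define the exterior derivative of θ at q as the bilinear form dθ(q)(a, b) = (Dθ(q)(a))(b) − (Dθ(q)(b))(a). Then the complete lift d_T θ := i_T dθ + d(i_T θ), i.e. the 1-form on E × E whose value at (q, v) on (w, u) is dθ(q)(v, w) + DF(q, v)(w, u), satisfies for all v, w, u ∈ E: dθ(q)(v, w) + DF(q, v)(w, u) = (Dθ(q)(v))(w) + θ(q)(u). -/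
/-! By the product rule, `DF(q, v)(w, u) = Dθ(q)(w)(v) + θ(q)(u)`; the term `Dθ(q)(w)(v)` is
exactly what the antisymmetrisation in `dθ(q)(v, w)` subtracts. -/

theorem fderiv_clm_apply_fst_snd {𝕜 E F G : Type*} [NontriviallyNormedField 𝕜]
    [NormedAddCommGroup E] [NormedSpace 𝕜 E] [NormedAddCommGroup F] [NormedSpace 𝕜 F]
    [NormedAddCommGroup G] [NormedSpace 𝕜 G] {f : E → F →L[𝕜] G} {q : E}
    (hf : DifferentiableAt 𝕜 f q) (v : F) (w : E) (u : F) :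
    fderiv 𝕜 (fun p : E × F => f p.1 p.2) (q, v) (w, u) = fderiv 𝕜 f q w v + f q u := by
  have hf_fst : HasFDerivAt (fun p : E × F => f p.1)
      ((fderiv 𝕜 f q).comp (ContinuousLinearMap.fst 𝕜 E F)) (q, v) :=
    hf.hasFDerivAt.comp (q, v) hasFDerivAt_fst
  rw [(hf_fst.clm_apply hasFDerivAt_snd).fderiv]
  simp [add_comm]

/-- Let `E` be a real normed vector space and `θ : E → (E →L[ℝ] ℝ)`
differentiable at `q`.  With `F (p, v) = θ p v` and
`dθ(q)(a, b) = (Dθ(q)(a))(b) − (Dθ(q)(b))(a)`, the complete lift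
`d_T θ = i_T dθ + d(i_T θ)`, whose value at `(q, v)` on `(w, u)` is
`dθ(q)(v, w) + DF(q, v)(w, u)`, satisfies
`dθ(q)(v, w) + DF(q, v)(w, u) = (Dθ(q)(v))(w) + θ(q)(u)` for all `v, w, u`. -/
theorem stmt_9
    {E : Type*} [NormedAddCommGroup E] [NormedSpace ℝ E]
    (θ : E → (E →L[ℝ] ℝ)) (q : E)
    (hθ : DifferentiableAt ℝ θ q)
    (F : E × E → ℝ) (hF : ∀ p : E × E, F p = θ p.1 p.2)
    (dθ : E → E → ℝ)
    (hdθ : ∀ a b : E, dθ a b = fderiv ℝ θ q a b - fderiv ℝ θ q b a) :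
    ∀ v w u : E, dθ v w + fderiv ℝ F (q, v) (w, u) = fderiv ℝ θ q v w + θ q u := by
  intro v w u
  obtain rfl : F = fun p => θ p.1 p.2 := funext hF
  rw [hdθ, fderiv_clm_apply_fst_snd hθ]
  ring
end
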